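/- arXiv:2003.09470 — 3 statements merged into one kernel-verified Lean document; each statement's English description precedes it below -/
import Mathlib

section
/- Let a ≤ b be positive integers and k ≥ 1 with a + b > k and a < 2k. Then the k-rainbow domination number of K_{a,b} equals max{a, k}. -/
open SimpleGraph Finset

/-- `f` is a `k`-rainbow dominating function of `G`: every vertex with empty label
sees all colors of `Fin k` among its neighbors' labels. -/
def IsKRDF {V : Type*} (G : SimpleGraph V) (k : ℕ) (f : V → Finset (Fin k)) : Prop :=
  ∀ v, f v = ∅ → ∀ i : Fin k, ∃ u, G.Adj v u ∧ i ∈ f u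

/-- `f` is a `k`-rainbow total dominating function of `G`: a `k`RDF such that every
vertex labeled by a singleton `{i}` has a neighbor whose label contains `i`. -/
def IsKRTDF {V : Type*} (G : SimpleGraph V) (k : ℕ) (f : V → Finset (Fin k)) : Prop :=
  IsKRDF G k f ∧ ∀ v (i : Fin k), f v = {i} → ∃ u, G.Adj v u ∧ i ∈ f u

/-- The `k`-rainbow domination number of `G`. -/
noncomputable def rdnum {V : Type*} [Fintype V] (G : SimpleGraph V) (k : ℕ) : ℕ :=
  sInf {n | ∃ f : V → Finset (Fin k), IsKRDF G k f ∧ ∑ v, (f v).card = n}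

/-- The `k`-rainbow total domination number of `G`. -/
noncomputable def rtdnum {V : Type*} [Fintype V] (G : SimpleGraph V) (k : ℕ) : ℕ :=
  sInf {n | ∃ f : V → Finset (Fin k), IsKRTDF G k f ∧ ∑ v, (f v).card = n}

/-- The domination number of `G`. -/
noncomputable def domnum {V : Type*} [Fintype V] (G : SimpleGraph V) : ℕ :=
  sInf {n | ∃ D : Finset V, (∀ v ∉ D, ∃ u ∈ D, G.Adj u v) ∧ D.card = n}

/-- The total domination number of `G`. -/
noncomputable def totdomnum {V : Type*} [Fintype V] (G : SimpleGraph V) : ℕ :=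
  sInf {n | ∃ D : Finset V, (∀ v, ∃ u ∈ D, G.Adj u v) ∧ D.card = n}

/-!
A vertex with empty label forces the whole opposite side to carry at least `k` colours, while a
side without empty labels carries at least as many colours as it has vertices. Running through the
four cases with `a ≤ b`, `k < a + b` and `a < 2k` gives weight at least `max a k`. Conversely,
pairing the vertices of `Fin (max a k)` surjectively with the left side and with the colours, and
labelling each left vertex by the colours of its partners, is a `k`-RDF of weight `max a k`.
-/

theorem card_le_sum_card_of_nonempty {ι γ : Type*} [Fintype ι] {g : ι → Finset γ}
    (hg : ∀ i, (g i).Nonempty) : Fintype.card ι ≤ ∑ i, #(g i) := by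
  simpa using card_nsmul_le_sum univ (fun i ↦ #(g i)) 1 fun i _ ↦ (hg i).card_pos

section RainbowDomination

variable {V : Type*} {G : SimpleGraph V} {k : ℕ} {f : V → Finset (Fin k)}

theorem IsKRDF.le_sum_card_of_eq_empty [DecidableEq V] (hf : IsKRDF G k f) {v : V}
    (hv : f v = ∅) {s : Finset V} (hs : ∀ u, G.Adj v u → u ∈ s) :
    k ≤ ∑ u ∈ s, #(f u) := by
  have hcover : (univ : Finset (Fin k)) ⊆ s.biUnion f := fun i _ ↦ by
    obtain ⟨u, hvu, hi⟩ := hf v hv i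
    exact mem_biUnion.2 ⟨u, hs u hvu, hi⟩
  calc k = #(univ : Finset (Fin k)) := (card_fin k).symm
    _ ≤ #(s.biUnion f) := card_le_card hcover
    _ ≤ ∑ u ∈ s, #(f u) := card_biUnion_le

theorem isKRDF_const_univ (G : SimpleGraph V) (k : ℕ) : IsKRDF G k fun _ ↦ univ :=
  fun _ hv i ↦ absurd (hv ▸ mem_univ i) (notMem_empty i)

variable [Fintype V]

theorem rdnum_le (hf : IsKRDF G k f) : rdnum G k ≤ ∑ v, #(f v) :=
  Nat.sInf_le ⟨f, hf, rfl⟩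

theorem le_rdnum {n : ℕ}
    (hn : ∀ f : V → Finset (Fin k), IsKRDF G k f → n ≤ ∑ v, #(f v)) :
    n ≤ rdnum G k := by
  obtain ⟨f, hf, hfw⟩ :
      rdnum G k ∈ {n | ∃ f : V → Finset (Fin k), IsKRDF G k f ∧ ∑ v, #(f v) = n} :=
    Nat.sInf_mem ⟨_, fun _ ↦ univ, isKRDF_const_univ G k, rfl⟩
  exact hfw ▸ hn f hf

end RainbowDomination

section CompleteBipartite

variable {α β : Type*} [Fintype α] [Fintype β] {k : ℕ}

theorem IsKRDF.le_sum_inr_or_card_le_sum_inl {f : α ⊕ β → Finset (Fin k)}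
    (hf : IsKRDF (completeBipartiteGraph α β) k f) :
    k ≤ ∑ y, #(f (.inr y)) ∨ Fintype.card α ≤ ∑ x, #(f (.inl x)) := by
  classical
  by_cases hA : ∀ x, (f (.inl x)).Nonempty
  · exact .inr (card_le_sum_card_of_nonempty hA)
  obtain ⟨x, hx⟩ := not_forall.1 hA
  refine .inl ?_
  simpa using hf.le_sum_card_of_eq_empty (not_nonempty_iff_eq_empty.1 hx)
    (s := univ.map .inr) fun u hu ↦ by cases u <;> simp_all

theorem IsKRDF.le_sum_inl_or_card_le_sum_inr {f : α ⊕ β → Finset (Fin k)}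
    (hf : IsKRDF (completeBipartiteGraph α β) k f) :
    k ≤ ∑ x, #(f (.inl x)) ∨ Fintype.card β ≤ ∑ y, #(f (.inr y)) := by
  classical
  by_cases hB : ∀ y, (f (.inr y)).Nonempty
  · exact .inr (card_le_sum_card_of_nonempty hB)
  obtain ⟨y, hy⟩ := not_forall.1 hB
  refine .inl ?_
  simpa using hf.le_sum_card_of_eq_empty (not_nonempty_iff_eq_empty.1 hy)
    (s := univ.map .inl) fun u hu ↦ by cases u <;> simp_all

theorem rdnum_completeBipartite_le_card {ι : Type*} [Fintype ι] {p : ι → α} {q : ι → Fin k}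
    (hp : Function.Surjective p) (hq : Function.Surjective q) :
    rdnum (completeBipartiteGraph α β) k ≤ Fintype.card ι := by
  classical
  set g : α → Finset (Fin k) := fun x ↦ (univ.filter (p · = x)).image q
  have hf : IsKRDF (completeBipartiteGraph α β) k (Sum.elim g fun _ ↦ ∅) := by
    rintro (x | y) hv i
    · obtain ⟨m, rfl⟩ := hp x
      exact absurd hv <| ne_empty_of_mem <| mem_image_of_mem q <| mem_filter.2 ⟨mem_univ m, rfl⟩
    · obtain ⟨m, rfl⟩ := hq i
      exact ⟨.inl (p m), by simp, mem_image_of_mem q (by simp)⟩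
  calc _ ≤ ∑ v, #(Sum.elim g (fun _ ↦ ∅) v) := rdnum_le hf
    _ = ∑ x, #(g x) := by simp [Fintype.sum_sum_type]
    _ ≤ ∑ x, #(univ.filter (p · = x)) := sum_le_sum fun x _ ↦ card_image_le
    _ = Fintype.card ι := (card_eq_sum_card_fiberwise fun m _ ↦ mem_univ (p m)).symm

end CompleteBipartite

theorem exists_surjective_fin {m n : ℕ} (hm : 0 < m) (hmn : m ≤ n) :
    ∃ p : Fin n → Fin m, Function.Surjective p :=
  haveI : Nonempty (Fin m) := Fin.pos_iff_nonempty.1 hm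
  ⟨_, Function.invFun_surjective (Fin.castLE_injective hmn)⟩

theorem rdnum_completeBipartite_mid_general (a b k : ℕ) (ha : 1 ≤ a) (hab : a ≤ b)
    (h : k < a + b) (h2k : a < 2 * k) :
    rdnum (completeBipartiteGraph (Fin a) (Fin b)) k = max a k := by
  refine le_antisymm ?_ (le_rdnum fun f hf ↦ ?_)
  · obtain ⟨p, hp⟩ := exists_surjective_fin (n := max a k) ha (le_max_left a k)
    obtain ⟨q, hq⟩ := exists_surjective_fin (n := max a k) (by omega) (le_max_right a k)
    simpa using rdnum_completeBipartite_le_card (β := Fin b) hp hq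
  · have hleft := hf.le_sum_inr_or_card_le_sum_inl
    have hright := hf.le_sum_inl_or_card_le_sum_inr
    rw [Fintype.sum_sum_type]
    simp only [Fintype.card_fin] at hleft hright
    omega

theorem rdnum_completeBipartite_mid (a b k : ℕ) (ha : 1 ≤ a) (hab : a ≤ b) (hk : 1 ≤ k)
    (h : k < a + b) (h2k : a < 2 * k) :
    rdnum (completeBipartiteGraph (Fin a) (Fin b)) k = max a k :=
  rdnum_completeBipartite_mid_general a b k ha hab h h2k
end

section
/- Let a ≤ b be positive integers and k ≥ 2 with a + b > k and ⌊k/2⌋ < a < ⌈(3k−2)/2⌉. Then the k-rainbow total domination number of K_{a,b} equals a + ⌈(k+1)/2⌉. -/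
open SimpleGraph Finset

/-!
A label can be empty only if the opposite side carries all `k` colors, and a singleton label
`{i}` forces `i` onto the opposite side. If both sides contain an empty label the weight is at
least `2k`; if, say, only the left side does, the colors are covered by the left labels
together with the non-singleton right labels, which gives `k + 2b ≤ w_L + 2 w_R`, hence a
weight of at least `b + ⌈(k+1)/2⌉` (or `2b` when the left side is entirely empty); if no label
is empty the weight is at least `a + b`. In the range `⌊k/2⌋ < a < ⌈(3k-2)/2⌉`, `a ≤ b`, all
of these are at least `a + ⌈(k+1)/2⌉`. The bound is attained by labelling the `i`-th left
vertex with the colors `{2i, 2i+1}` clamped to the last color, and a single right vertex with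
the last color.
-/

section Covering

variable {ι γ : Type*} [Fintype ι]

theorem card_le_sum_card_of_forall_exists_mem [Fintype γ] (g : ι → Finset γ)
    (h : ∀ c, ∃ i, c ∈ g i) : Fintype.card γ ≤ ∑ i, (g i).card := by
  classical
  calc Fintype.card γ = (univ.biUnion g).card := by
        rw [← card_univ, univ_subset_iff.mp fun c _ => mem_biUnion.mpr
          (by obtain ⟨i, hi⟩ := h c; exact ⟨i, mem_univ i, hi⟩)]
    _ ≤ ∑ i, (g i).card := card_biUnion_le

theorem card_le_sum_card_of_forall_nonempty (g : ι → Finset γ) (h : ∀ i, (g i).Nonempty) :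
    Fintype.card ι ≤ ∑ i, (g i).card := by
  simpa using card_nsmul_le_sum univ (fun i => (g i).card) 1 fun i _ => (h i).card_pos

end Covering

section RainbowTotalDomination

variable {V W : Type*} {G : SimpleGraph V} {H : SimpleGraph W} {k : ℕ} {f : V → Finset (Fin k)}

theorem IsKRTDF.comp_iso (hf : IsKRTDF G k f) (e : H ≃g G) : IsKRTDF H k (f ∘ e) := by
  refine ⟨fun v hv i => ?_, fun v i hv => ?_⟩
  · obtain ⟨u, hu, hi⟩ := hf.1 (e v) hv i
    exact ⟨e.symm u, by simpa [← e.map_adj_iff], by simpa using hi⟩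
  · obtain ⟨u, hu, hi⟩ := hf.2 (e v) i hv
    exact ⟨e.symm u, by simpa [← e.map_adj_iff], by simpa using hi⟩

variable [Fintype V]

theorem rtdnum_le_sum_card (hf : IsKRTDF G k f) : rtdnum G k ≤ ∑ v, (f v).card :=
  Nat.sInf_le ⟨f, hf, rfl⟩

theorem exists_isKRTDF_sum_card_eq_rtdnum (hf : IsKRTDF G k f) :
    ∃ g, IsKRTDF G k g ∧ ∑ v, (g v).card = rtdnum G k :=
  Nat.sInf_mem (s := {n | ∃ g, IsKRTDF G k g ∧ ∑ v, (g v).card = n}) ⟨_, f, hf, rfl⟩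

end RainbowTotalDomination

namespace IsKRTDF

variable {α β : Type*} {k : ℕ} {f : α ⊕ β → Finset (Fin k)}

theorem swap (hf : IsKRTDF (completeBipartiteGraph α β) k f) :
    IsKRTDF (completeBipartiteGraph β α) k (f ∘ Sum.swap) :=
  hf.comp_iso { Equiv.sumComm β α with map_rel_iff' := by simp }

theorem exists_mem_inr_of_inl_eq_empty (hf : IsKRTDF (completeBipartiteGraph α β) k f) {x : α}
    (hx : f (.inl x) = ∅) (i : Fin k) : ∃ y, i ∈ f (.inr y) := by
  obtain ⟨_ | y, hxy, hi⟩ := hf.1 _ hx i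
  · simp at hxy
  · exact ⟨y, hi⟩

theorem exists_mem_inl_of_inr_eq_singleton (hf : IsKRTDF (completeBipartiteGraph α β) k f)
    {y : β} {i : Fin k} (hy : f (.inr y) = {i}) : ∃ x, i ∈ f (.inl x) := by
  obtain ⟨x | _, hxy, hi⟩ := hf.2 _ i hy
  · exact ⟨x, hi⟩
  · simp at hxy

variable [Fintype β]

theorem le_sum_card_inr_of_inl_eq_empty (hf : IsKRTDF (completeBipartiteGraph α β) k f)
    {x : α} (hx : f (.inl x) = ∅) : k ≤ ∑ y, (f (.inr y)).card := by
  simpa using card_le_sum_card_of_forall_exists_mem _ (hf.exists_mem_inr_of_inl_eq_empty hx)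

/-- The colors are covered by the left labels and the non-singleton right labels, since the
color of a right singleton reappears on the left. -/
theorem add_two_mul_card_le [Fintype α] (hf : IsKRTDF (completeBipartiteGraph α β) k f)
    (hcover : ∀ i, ∃ y, i ∈ f (.inr y)) (hne : ∀ y, (f (.inr y)).Nonempty) :
    k + 2 * Fintype.card β ≤ ∑ x, (f (.inl x)).card + 2 * ∑ y, (f (.inr y)).card := by
  classical
  let big (y : β) : Finset (Fin k) := if 2 ≤ (f (.inr y)).card then f (.inr y) else ∅
  have hcover' : ∀ i, ∃ v, i ∈ Sum.elim (f ∘ .inl) big v := by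
    intro i
    obtain ⟨y, hi⟩ := hcover i
    by_cases hy : 2 ≤ (f (.inr y)).card
    · exact ⟨.inr y, by simpa [big, hy] using hi⟩
    · obtain ⟨j, hj⟩ := card_eq_one.mp
        (show (f (.inr y)).card = 1 by have := (hne y).card_pos; omega)
      obtain rfl : i = j := by simpa [hj] using hi
      obtain ⟨x, hx⟩ := hf.exists_mem_inl_of_inr_eq_singleton hj
      exact ⟨.inl x, hx⟩
  have hbig : ∑ y, (big y).card + 2 * Fintype.card β ≤ 2 * ∑ y, (f (.inr y)).card := by
    rw [Fintype.card_eq_sum_ones, mul_sum, mul_sum, ← sum_add_distrib]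
    refine sum_le_sum fun y _ => ?_
    have := (hne y).card_pos
    by_cases hy : 2 ≤ (f (.inr y)).card
    · simp only [big, if_pos hy]; omega
    · simp only [big, if_neg hy, card_empty]; omega
  have := card_le_sum_card_of_forall_exists_mem _ hcover'
  rw [Fintype.sum_sum_type, Fintype.card_fin] at this
  simp only [Sum.elim_inl, Sum.elim_inr, Function.comp_apply] at this
  omega

theorem two_mul_card_le_of_forall_inl_eq_empty (hf : IsKRTDF (completeBipartiteGraph α β) k f)
    (hempty : ∀ x, f (.inl x) = ∅) (hne : ∀ y, (f (.inr y)).Nonempty) :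
    2 * Fintype.card β ≤ ∑ y, (f (.inr y)).card := by
  refine (card_nsmul_le_sum univ _ 2 fun y _ => ?_).trans_eq' (by simp [mul_comm])
  by_contra! hy
  obtain ⟨i, hi⟩ := card_eq_one.mp
    (show (f (.inr y)).card = 1 by have := (hne y).card_pos; omega)
  obtain ⟨x, hx⟩ := hf.exists_mem_inl_of_inr_eq_singleton hi
  simp [hempty x] at hx

theorem min_le_sum_card_of_inl_eq_empty [Fintype α]
    (hf : IsKRTDF (completeBipartiteGraph α β) k f) {x : α} (hx : f (.inl x) = ∅)
    (hne : ∀ y, (f (.inr y)).Nonempty) :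
    min (2 * Fintype.card β) (Fintype.card β + (k + 2) / 2) ≤ ∑ v, (f v).card := by
  rw [Fintype.sum_sum_type]
  by_cases hempty : ∀ x, f (.inl x) = ∅
  · have := hf.two_mul_card_le_of_forall_inl_eq_empty hempty hne
    omega
  · obtain ⟨x', hx'⟩ := not_forall.mp hempty
    have hL : 0 < ∑ x, (f (.inl x)).card :=
      (card_pos.mpr (nonempty_iff_ne_empty.mpr hx')).trans_le
        (single_le_sum (f := fun x => (f (.inl x)).card) (by simp) (mem_univ x'))
    have := hf.add_two_mul_card_le (hf.exists_mem_inr_of_inl_eq_empty hx) hne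
    omega

theorem card_add_le_sum_card_completeBipartite [Fintype α]
    (hf : IsKRTDF (completeBipartiteGraph α β) k f)
    (hab : Fintype.card α ≤ Fintype.card β) (h1 : k / 2 < Fintype.card α)
    (h2 : Fintype.card α < (3 * k - 1) / 2) :
    Fintype.card α + (k + 2) / 2 ≤ ∑ v, (f v).card := by
  have hsum : ∑ v, (f v).card = ∑ x, (f (.inl x)).card + ∑ y, (f (.inr y)).card :=
    Fintype.sum_sum_type _
  by_cases hL : ∃ x, f (.inl x) = ∅ <;> by_cases hR : ∃ y, f (.inr y) = ∅
  · obtain ⟨x, hx⟩ := hL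
    obtain ⟨y, hy⟩ := hR
    have hkR := hf.le_sum_card_inr_of_inl_eq_empty hx
    have hkL : k ≤ ∑ x, (f (.inl x)).card := hf.swap.le_sum_card_inr_of_inl_eq_empty hy
    omega
  · obtain ⟨x, hx⟩ := hL
    have := hf.min_le_sum_card_of_inl_eq_empty hx (by simpa [nonempty_iff_ne_empty] using hR)
    omega
  · obtain ⟨y, hy⟩ := hR
    have hswap : ∑ v, (f (Sum.swap v)).card = ∑ v, (f v).card :=
      (Equiv.sumComm β α).sum_comp fun v => (f v).card
    have := hf.swap.min_le_sum_card_of_inl_eq_empty hy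
      (by simpa [nonempty_iff_ne_empty] using hL)
    simp only [Function.comp_apply, hswap] at this
    omega
  · have := card_le_sum_card_of_forall_nonempty f <| by
      rintro (x | y)
      · exact nonempty_iff_ne_empty.mpr fun h => hL ⟨x, h⟩
      · exact nonempty_iff_ne_empty.mpr fun h => hR ⟨y, h⟩
    rw [Fintype.card_sum] at this
    omega

end IsKRTDF

def clampedPairLabel {β : Type*} [DecidableEq β] (a m : ℕ) (y₀ : β) :
    Fin a ⊕ β → Finset (Fin (m + 1)) :=
  Sum.elim (fun x => {Fin.clamp (2 * x) m, Fin.clamp (2 * x + 1) m})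
    (fun y => if y = y₀ then {Fin.last m} else ∅)

namespace clampedPairLabel

variable {β : Type*} [DecidableEq β] {a m : ℕ} {y₀ : β}

theorem mem_inl_div_two (i : Fin (m + 1)) (hi : (i : ℕ) / 2 < a) :
    i ∈ clampedPairLabel a m y₀ (.inl ⟨i / 2, hi⟩) := by
  simp only [clampedPairLabel, Sum.elim_inl, mem_insert, mem_singleton, Fin.ext_iff,
    Fin.coe_clamp]
  omega

theorem isKRTDF (ha : m / 2 < a) :
    IsKRTDF (completeBipartiteGraph (Fin a) β) (m + 1) (clampedPairLabel a m y₀) := by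
  have hcover (i : Fin (m + 1)) : ∃ x, i ∈ clampedPairLabel a m y₀ (.inl x) :=
    ⟨_, mem_inl_div_two i (by omega)⟩
  refine ⟨fun v hv i => ?_, fun v i hv => ?_⟩
  · obtain x | y := v
    · simp [clampedPairLabel] at hv
    · obtain ⟨x, hx⟩ := hcover i
      exact ⟨.inl x, by simp, hx⟩
  · obtain x | y := v
    · refine ⟨.inr y₀, by simp, ?_⟩
      simp only [clampedPairLabel, Sum.elim_inl] at hv
      have h₀ : Fin.clamp (2 * x) m = i := mem_singleton.mp (hv ▸ mem_insert_self _ _)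
      have h₁ : Fin.clamp (2 * x + 1) m = i :=
        mem_singleton.mp (hv ▸ mem_insert_of_mem (mem_singleton_self _))
      simp only [clampedPairLabel, Sum.elim_inr, if_pos, mem_singleton, Fin.ext_iff, Fin.val_last]
      rw [Fin.ext_iff, Fin.coe_clamp] at h₀ h₁
      omega
    · by_cases hy : y = y₀
      · obtain ⟨x, hx⟩ := hcover i
        exact ⟨.inl x, by simp, hx⟩
      · simp [clampedPairLabel, hy] at hv

theorem sum_card_le [Fintype β] :
    ∑ v, (clampedPairLabel a m y₀ v).card ≤ a + (m + 3) / 2 := by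
  have hL : ∑ x : Fin a, (clampedPairLabel a m y₀ (.inl x)).card ≤
      ∑ x : Fin a, (1 + if (x : ℕ) < (m + 1) / 2 then 1 else 0) := by
    refine sum_le_sum fun x _ => ?_
    by_cases hx : (x : ℕ) < (m + 1) / 2
    · simpa [clampedPairLabel, hx] using card_le_two
    · have : Fin.clamp (2 * x) m = Fin.clamp (2 * x + 1) m := by
        ext
        simp only [Fin.coe_clamp]
        omega
      simp [clampedPairLabel, this, hx]
  have hR : ∑ y, (clampedPairLabel a m y₀ (.inr y)).card = 1 := by
    simp [clampedPairLabel, apply_ite card]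
  rw [sum_add_distrib, sum_boole, Fin.card_filter_val_lt] at hL
  rw [Fintype.sum_sum_type, hR]
  simp only [sum_const, card_univ, Fintype.card_fin, smul_eq_mul, mul_one, Nat.cast_id] at hL
  omega

end clampedPairLabel

theorem rtdnum_completeBipartite_mid_general (a b k : ℕ) (hab : a ≤ b)
    (h1 : k / 2 < a) (h2 : a < (3 * k - 1) / 2) :
    rtdnum (completeBipartiteGraph (Fin a) (Fin b)) k = a + (k + 2) / 2 := by
  obtain ⟨m, rfl⟩ : ∃ m, k = m + 1 := ⟨k - 1, by omega⟩
  have hf : IsKRTDF _ _ (clampedPairLabel a m (⟨0, by omega⟩ : Fin b)) :=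
    clampedPairLabel.isKRTDF (by omega)
  refine le_antisymm ((rtdnum_le_sum_card hf).trans ?_) ?_
  · exact clampedPairLabel.sum_card_le.trans_eq (by omega)
  · obtain ⟨g, hg, hw⟩ := exists_isKRTDF_sum_card_eq_rtdnum hf
    simpa [← hw] using hg.card_add_le_sum_card_completeBipartite (by simpa) (by simpa) (by simpa)

theorem rtdnum_completeBipartite_mid (a b k : ℕ) (ha : 1 ≤ a) (hab : a ≤ b) (hk : 2 ≤ k)
    (h : k < a + b) (h1 : k / 2 < a) (h2 : a < (3 * k - 1) / 2) :
    rtdnum (completeBipartiteGraph (Fin a) (Fin b)) k = a + (k + 2) / 2 :=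
  rtdnum_completeBipartite_mid_general a b k hab h1 h2
end

section
/- If G is a bipartite graph, then γ_{2rt}(G) = 2 · γ(G). -/
open SimpleGraph Finset

/-!
For `γ_{2rt} ≤ 2γ`, give every vertex of a minimum dominating set the label `{0, 1}`.
Conversely, let `c` be a proper 2-colouring and `f` a 2RTDF. If a colour `i` is missing from `f v`,
then `f v ⊆ {i + 1}`, so either rainbow or total domination yields a neighbour `u` with
`i + 1 ∈ f u`; as `c u = c v + 1`, each set `D j = {v | c v + j ∈ f v}` (addition mod 2) is
dominating. Every `i ∈ f v` puts `v` into exactly one `D j`, so `|D 0| + |D 1| = ∑ |f v|`.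
-/

lemma Fin.two_eq_add_one_of_ne {a b : Fin 2} (h : a ≠ b) : a = b + 1 := by
  revert a b; decide

lemma Finset.card_filter_add_left_mem {α : Type*} [AddGroup α] [Fintype α] [DecidableEq α]
    (a : α) (s : Finset α) : #{j | a + j ∈ s} = #s := by
  rw [card_filter, ← Equiv.sum_comp (Equiv.addLeft (-a)) fun j => if a + j ∈ s then 1 else 0]
  simp

namespace SimpleGraph

variable {V : Type*} (G : SimpleGraph V)

def IsDominatingSet (D : Finset V) : Prop :=
  ∀ v ∉ D, ∃ u ∈ D, G.Adj u v

variable {G}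

lemma isKRTDF_ite_univ_of_isDominatingSet [DecidableEq V] {k : ℕ} (hk : 2 ≤ k) {D : Finset V}
    (hD : G.IsDominatingSet D) :
    IsKRTDF G k (fun v => if v ∈ D then univ else ∅) := by
  refine ⟨fun v hv i => ?_, fun v i hv => ?_⟩
  · by_cases hvD : v ∈ D
    · simp only [hvD, if_true] at hv
      exact ((univ_nonempty_iff.mpr ⟨⟨0, by omega⟩⟩).ne_empty hv).elim
    · obtain ⟨u, huD, hadj⟩ := hD v hvD
      exact ⟨u, hadj.symm, by simp [huD]⟩
  · by_cases hvD : v ∈ D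
    · simp only [hvD, if_true] at hv
      have := congrArg card hv
      simp only [card_univ, Fintype.card_fin, card_singleton] at this
      omega
    · exact (singleton_ne_empty i (by simpa [hvD] using hv.symm)).elim

lemma IsKRTDF.exists_adj_add_one_mem {f : V → Finset (Fin 2)} (hf : IsKRTDF G 2 f) {v : V}
    {i : Fin 2} (hi : i ∉ f v) : ∃ u, G.Adj v u ∧ i + 1 ∈ f u := by
  have hsub : f v ⊆ {i + 1} := fun j hj =>
    mem_singleton.mpr (Fin.two_eq_add_one_of_ne fun h => hi (h ▸ hj))
  rcases subset_singleton_iff.mp hsub with hv | hv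
  · exact hf.1 v hv (i + 1)
  · exact hf.2 v (i + 1) hv

lemma Coloring.eq_add_one_of_adj (c : G.Coloring (Fin 2)) {u v : V} (h : G.Adj v u) :
    c u = c v + 1 :=
  Fin.two_eq_add_one_of_ne (c.valid h).symm

lemma Coloring.isDominatingSet_filter_add_mem [Fintype V] (c : G.Coloring (Fin 2))
    {f : V → Finset (Fin 2)} (hf : IsKRTDF G 2 f) (j : Fin 2) :
    G.IsDominatingSet {v | c v + j ∈ f v} := by
  intro v hv
  simp only [mem_filter, mem_univ, true_and] at hv ⊢
  obtain ⟨u, hadj, hu⟩ := hf.exists_adj_add_one_mem hv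
  refine ⟨u, ?_, hadj.symm⟩
  rwa [c.eq_add_one_of_adj hadj, add_right_comm]

variable [Fintype V]

variable (G) in
lemma isDominatingSet_univ : G.IsDominatingSet univ :=
  fun v hv => (hv (mem_univ v)).elim

variable (G) in
lemma domnum_le_card {D : Finset V} (hD : G.IsDominatingSet D) : domnum G ≤ #D :=
  Nat.sInf_le ⟨D, hD, rfl⟩

variable (G) in
lemma exists_isDominatingSet_card_eq_domnum : ∃ D, G.IsDominatingSet D ∧ #D = domnum G :=
  Nat.sInf_mem (s := {n | ∃ D : Finset V, G.IsDominatingSet D ∧ #D = n})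
    ⟨_, univ, G.isDominatingSet_univ, rfl⟩

lemma rtdnum_le_sum_card {k : ℕ} {f : V → Finset (Fin k)} (hf : IsKRTDF G k f) :
    rtdnum G k ≤ ∑ v, #(f v) :=
  Nat.sInf_le ⟨f, hf, rfl⟩

variable (G) in
lemma exists_isKRTDF_sum_card_eq_rtdnum {k : ℕ} (hk : 2 ≤ k) :
    ∃ f : V → Finset (Fin k), IsKRTDF G k f ∧ ∑ v, #(f v) = rtdnum G k := by
  classical
  exact Nat.sInf_mem (s := {n | ∃ f : V → Finset (Fin k), IsKRTDF G k f ∧ ∑ v, #(f v) = n})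
    ⟨_, _, isKRTDF_ite_univ_of_isDominatingSet hk G.isDominatingSet_univ, rfl⟩

variable (G) in
lemma rtdnum_le_mul_domnum {k : ℕ} (hk : 2 ≤ k) : rtdnum G k ≤ k * domnum G := by
  classical
  obtain ⟨D, hD, hcard⟩ := G.exists_isDominatingSet_card_eq_domnum
  calc rtdnum G k ≤ ∑ v, #(if v ∈ D then (univ : Finset (Fin k)) else ∅) :=
        rtdnum_le_sum_card (isKRTDF_ite_univ_of_isDominatingSet hk hD)
    _ = k * domnum G := by simp [apply_ite card, ← hcard, mul_comm]

lemma Coloring.two_mul_domnum_le_sum_card (c : G.Coloring (Fin 2)) {f : V → Finset (Fin 2)}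
    (hf : IsKRTDF G 2 f) : 2 * domnum G ≤ ∑ v, #(f v) := by
  calc 2 * domnum G = ∑ _j : Fin 2, domnum G := by simp
    _ ≤ ∑ j, #{v | c v + j ∈ f v} :=
        sum_le_sum fun j _ => domnum_le_card G (c.isDominatingSet_filter_add_mem hf j)
    _ = ∑ v, #{j | c v + j ∈ f v} := by simp only [card_filter]; exact sum_comm
    _ = ∑ v, #(f v) := by simp only [card_filter_add_left_mem]

end SimpleGraph

theorem rtdnum_two_of_bipartite {V : Type*} [Fintype V] (G : SimpleGraph V)
    (hbip : G.Colorable 2) :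
    rtdnum G 2 = 2 * domnum G := by
  obtain ⟨c⟩ := hbip
  refine le_antisymm (G.rtdnum_le_mul_domnum le_rfl) ?_
  obtain ⟨f, hf, hsum⟩ := G.exists_isKRTDF_sum_card_eq_rtdnum le_rfl
  exact hsum ▸ c.two_mul_domnum_le_sum_card hf
end
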